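/- Let n ≥ 3 and let k be an integer with 0 ≤ k ≤ ℓ. Then for every vector v ∈ P(n), at least one of −m_k ⪯ v and −m_k ⪯ −v holds; equivalently, for every subset S of {1,…,n}, the minimal element −m_k of Q(n) is less than or equal to p(S) or to −p(S) in the order ⪯. -/
import Mathlib


open Finset

/-- Cumulative sum: `x 0 + ... + x k`. -/
def cum {n : ℕ} (x : Fin n → ℤ) (k : Fin n) : ℤ := ∑ i ∈ Finset.Iic k, x i

/-- The partial order `⪯`: every partial sum of `x` is at most that of `y`. -/
def ple {n : ℕ} (x y : Fin n → ℤ) : Prop := ∀ k : Fin n, cum x k ≤ cum y k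

/-- Membership in `P(n)`: all entries are `1` or `-1`. -/
def isPM {n : ℕ} (v : Fin n → ℤ) : Prop := ∀ i, v i = 1 ∨ v i = -1

/-- Membership in `Q(n)`. -/
def inQ {n : ℕ} (v : Fin n → ℤ) : Prop := isPM v ∧ ¬ ple v 0 ∧ ¬ ple 0 v

/-- Standard inner product on `ℤ^n`. -/
def dotp {n : ℕ} (x y : Fin n → ℤ) : ℤ := ∑ i, x i * y i

/-- The ±1 vector of a subset `S`. -/
def pS {n : ℕ} (S : Finset (Fin n)) : Fin n → ℤ := fun i => if i ∈ S then 1 else -1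

/-- The vector `m_k`: first `k` entries 1, next `k+1` entries −1, rest 1 (0-indexed). -/
def mvec (n k : ℕ) : Fin n → ℤ := fun i => if i.val < k then 1 else if i.val < 2 * k + 1 then -1 else 1

/-- An instance of the partition problem: `c_1 ≥ c_2 ≥ ⋯ ≥ c_n ≥ 0`. -/
def monoc {n : ℕ} (c : Fin n → ℤ) : Prop := (∀ i j : Fin n, i ≤ j → c j ≤ c i) ∧ ∀ i, 0 ≤ c i

/-- Natural-index version of the entries of `mvec`. -/
def mfun (k : ℕ) : ℕ → ℤ := fun m => if m < k then 1 else if m < 2 * k + 1 then -1 else 1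

/-- Natural-index partial sums of `mfun`. -/
def mF (k m : ℕ) : ℤ := ∑ i ∈ Finset.range m, mfun k i

lemma mF_facts (k m : ℕ) :
    (m ≤ k → mF k m = m) ∧
    (k ≤ m → m ≤ 2 * k + 1 → mF k m = 2 * (k : ℤ) - m) ∧
    (2 * k + 1 ≤ m → mF k m = (m : ℤ) - (2 * k + 2)) := by
  induction m with
  | zero => simp [mF]
  | succ m ih =>
    obtain ⟨h1, h2, h3⟩ := ih
    have hstep : mF k (m + 1) = mF k m + mfun k m := Finset.sum_range_succ _ _
    unfold mfun at hstep
    split_ifs at hstep <;>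
      refine ⟨fun H => ?_, fun H H' => ?_, fun H => ?_⟩ <;>
      push_cast [hstep] <;> omega

lemma cum_comp {n : ℕ} (g : ℕ → ℤ) (j : Fin n) :
    cum (fun i => g i.val) j = ∑ m ∈ Finset.Iic j.val, g m := by
  rw [cum, ← Fin.map_valEmbedding_Iic, Finset.sum_map]; rfl

lemma cum_mvec {n k : ℕ} (j : Fin n) : cum (mvec n k) j = mF k (j.val + 1) := by
  have h : mvec n k = fun i : Fin n => mfun k i.val := rfl
  rw [h, cum_comp, mF]
  congr 1
  ext x; simp [Nat.lt_succ_iff]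

lemma cum_neg' {n : ℕ} (x : Fin n → ℤ) (j : Fin n) : cum (-x) j = - cum x j := by
  simp [cum]

lemma cum_bounds {n : ℕ} {v : Fin n → ℤ} (hv : isPM v) (j : Fin n) :
    -((j.val : ℤ) + 1) ≤ cum v j ∧ cum v j ≤ (j.val : ℤ) + 1 := by
  constructor
  · have h := Finset.card_nsmul_le_sum (Finset.Iic j) v (-1)
      (fun i _ => by rcases hv i with h | h <;> simp [h])
    simpa [Fin.card_Iic, cum, add_comm] using h
  · have h := Finset.sum_le_card_nsmul (Finset.Iic j) v 1
      (fun i _ => by rcases hv i with h | h <;> simp [h])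
    simpa [Fin.card_Iic, cum, add_comm] using h

lemma cum_parity {n : ℕ} {v : Fin n → ℤ} (hv : isPM v) (j : Fin n) :
    (2 : ℤ) ∣ (cum v j - ((j.val : ℤ) + 1)) := by
  have h : cum v j - ((j.val : ℤ) + 1) = ∑ i ∈ Finset.Iic j, (v i - 1) := by
    rw [Finset.sum_sub_distrib, Finset.sum_const, Fin.card_Iic, cum]
    push_cast; ring
  rw [h]
  exact Finset.dvd_sum (fun i _ => by rcases hv i with h | h <;> simp [h])

lemma cum_lip {n : ℕ} {v : Fin n → ℤ} (hv : isPM v) {a b : Fin n} (hab : a ≤ b) :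
    cum v b - cum v a ≤ (b.val : ℤ) - a.val ∧ cum v a - cum v b ≤ (b.val : ℤ) - a.val := by
  have hd : cum v b - cum v a = ∑ i ∈ Finset.Ioc a b, v i := by
    have hsplit : Finset.Iic a ∪ Finset.Ioc a b = Finset.Iic b := by
      ext x
      simp only [Finset.mem_union, Finset.mem_Iic, Finset.mem_Ioc]
      constructor
      · rintro (hx | ⟨_, hx⟩)
        · exact hx.trans hab
        · exact hx
      · intro hx
        rcases le_or_gt x a with hxa | hxa
        · exact Or.inl hxa
        · exact Or.inr ⟨hxa, hx⟩
    rw [cum, cum, ← hsplit, Finset.sum_union (by simp only [Finset.disjoint_left, Finset.mem_Iic, Finset.mem_Ioc]; exact fun x hx hx2 => absurd hx (not_le.mpr hx2.1))]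
    ring
  have hcard : (#(Finset.Ioc a b) : ℤ) = (b.val : ℤ) - a.val := by
    rw [Fin.card_Ioc]; omega
  constructor
  · rw [hd]
    calc ∑ i ∈ Finset.Ioc a b, v i ≤ #(Finset.Ioc a b) • (1 : ℤ) :=
          Finset.sum_le_card_nsmul _ _ _ (fun i _ => by rcases hv i with h | h <;> simp [h])
      _ = (b.val : ℤ) - a.val := by rw [← hcard]; simp
  · have h := Finset.card_nsmul_le_sum (Finset.Ioc a b) v (-1)
      (fun i _ => by rcases hv i with h | h <;> simp [h])
    simp only [nsmul_eq_mul, mul_neg, mul_one] at h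
    linarith [hd, hcard]

theorem stmt18 {n : ℕ} (hn : 3 ≤ n) (k : ℕ) (hk : k ≤ (n - 1) / 2) :
    ∀ v : Fin n → ℤ, isPM v → ple (-(mvec n k)) v ∨ ple (-(mvec n k)) (-v) := by
  intro v hv
  by_cases h1 : ple (-(mvec n k)) v
  · exact Or.inl h1
  right
  rw [ple] at h1
  push_neg at h1
  obtain ⟨j, hj⟩ := h1
  rw [cum_neg', cum_mvec] at hj
  intro i
  rw [cum_neg', cum_neg', cum_mvec]
  obtain ⟨hMi1, hMi2, hMi3⟩ := mF_facts k (i.val + 1)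
  obtain ⟨hMj1, hMj2, hMj3⟩ := mF_facts k (j.val + 1)
  have hpar := cum_parity hv j
  have hbi := cum_bounds hv i
  have hbj := cum_bounds hv j
  rcases le_total i j with h | h
  · have hlip := cum_lip hv h
    have hval : i.val ≤ j.val := h
    set ci := cum v i
    set cj := cum v j
    set Mi := mF k (i.val + 1)
    set Mj := mF k (j.val + 1)
    -- case analysis on regions
    rcases lt_or_ge j.val k with hr | hr
    · -- impossible: cj < -Mj = -(j+1) but cj >= -(j+1)
      rw [hMj1 (by omega)] at hj
      exfalso; push_cast at hj; linarith [hbj.1]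
    rcases lt_or_ge j.val (2*k+1) with hr2 | hr2
    · rw [hMj2 (by omega) (by omega)] at hj
      have hcj : cj ≤ (j.val : ℤ) - 2*k - 1 := by
        obtain ⟨t, ht⟩ := hpar
        push_cast at hj ht ⊢
        omega
      rcases lt_or_ge i.val k with hs | hs
      · rw [hMi1 (by omega)]; push_cast; linarith [hbi.2]
      · rw [hMi2 (by omega) (by omega)]
        push_cast
        linarith [hlip.2]
    · rw [hMj3 (by omega)] at hj
      have hcj : cj ≤ 2*(k:ℤ) - (j.val : ℤ) - 1 := by
        obtain ⟨t, ht⟩ := hpar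
        push_cast at hj ht ⊢
        omega
      rcases lt_or_ge i.val k with hs | hs
      · rw [hMi1 (by omega)]; push_cast; linarith [hbi.2]
      rcases lt_or_ge i.val (2*k+1) with hs2 | hs2
      · rw [hMi2 (by omega) (by omega)]
        push_cast
        linarith [hlip.2]
      · rw [hMi3 (by omega)]
        push_cast
        have : (i.val : ℤ) ≤ (j.val : ℤ) := by exact_mod_cast hval
        linarith [hlip.2]
  · have hlip := cum_lip hv h
    have hval : j.val ≤ i.val := h
    set ci := cum v i
    set cj := cum v j
    set Mi := mF k (i.val + 1)
    set Mj := mF k (j.val + 1)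
    have hvz : (j.val : ℤ) ≤ (i.val : ℤ) := by exact_mod_cast hval
    rcases lt_or_ge j.val k with hr | hr
    · rw [hMj1 (by omega)] at hj
      exfalso; push_cast at hj; linarith [hbj.1]
    rcases lt_or_ge j.val (2*k+1) with hr2 | hr2
    · rw [hMj2 (by omega) (by omega)] at hj
      have hcj : cj ≤ (j.val : ℤ) - 2*k - 1 := by
        obtain ⟨t, ht⟩ := hpar
        push_cast at hj ht ⊢
        omega
      rcases lt_or_ge i.val k with hs | hs
      · rw [hMi1 (by omega)]; push_cast; linarith [hbi.2]
      rcases lt_or_ge i.val (2*k+1) with hs2 | hs2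
      · rw [hMi2 (by omega) (by omega)]
        push_cast
        have : (i.val : ℤ) ≤ 2*k := by exact_mod_cast Nat.lt_succ_iff.mp hs2
        linarith [hlip.1]
      · rw [hMi3 (by omega)]
        push_cast
        linarith [hlip.1]
    · rw [hMj3 (by omega)] at hj
      have hcj : cj ≤ 2*(k:ℤ) - (j.val : ℤ) - 1 := by
        obtain ⟨t, ht⟩ := hpar
        push_cast at hj ht ⊢
        omega
      rcases lt_or_ge i.val (2*k+1) with hs2 | hs2
      · exfalso; omega
      · rw [hMi3 (by omega)]
        push_cast
        have : 2*(k:ℤ)+1 ≤ (j.val : ℤ) := by exact_mod_cast hr2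
        linarith [hlip.1]
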